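/- For every t with 0 < t < 1, the function f_t is an even function of y: f_t(−y) = f_t(y) for all real y. -/

import Mathlib

open MeasureTheory Real Set

/-- Modified Bessel function of the third kind `K_w(a)` for `a > 0`:
`K_w(a) = ∫₀^∞ e^{−a·cosh u} · cosh(w·u) du`. -/
noncomputable def Kbes (a : ℝ) (w : ℂ) : ℂ :=
  ∫ u in Ioi (0:ℝ), Complex.exp (-(a:ℂ) * (Real.cosh u : ℂ)) * Complex.cosh (w * (u:ℂ))

/-- `K_{iz}(a) = ∫₀^∞ e^{−a·cosh u} · cos(z·u) du`. -/
noncomputable def Kiz (a : ℝ) (z : ℂ) : ℂ :=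
  ∫ u in Ioi (0:ℝ), Complex.exp (-(a:ℂ) * (Real.cosh u : ℂ)) * Complex.cos (z * (u:ℂ))

/-- The real-valued function `K_{ix}(a)` for real `x`. -/
noncomputable def Kre (a x : ℝ) : ℝ :=
  ∫ u in Ioi (0:ℝ), Real.exp (-a * Real.cosh u) * Real.cos (x * u)

/-- The series `∑_{k=0}^∞ ((y+1)_k)² (1−t)^k / (k!·(k+1)!) = ₂F₁(y+1,y+1;2;1−t)`. -/
noncomputable def Sgauss (y t : ℝ) : ℝ :=
  ∑' k : ℕ, ((ascPochhammer ℝ k).eval (y + 1))^2 * (1 - t)^k /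
    ((k.factorial : ℝ) * ((k+1).factorial : ℝ))

/-- `f_t(y) = y² · t^y · ₂F₁(y+1, y+1; 2; 1−t)`. -/
noncomputable def fPol (t y : ℝ) : ℝ := y^2 * t ^ y * Sgauss y t

/-- `F_{a,c}(z) = K_{i(z−ic)}(a) + K_{i(z+ic)}(a)`. -/
noncomputable def Fac (a c : ℝ) (z : ℂ) : ℂ :=
  Kbes a (Complex.I * (z - Complex.I * (c:ℂ))) + Kbes a (Complex.I * (z + Complex.I * (c:ℂ)))

/-- Pólya's function `Ξ*(z) = 16π² ∫₀^∞ cosh(9u/2) e^{−2π cosh 2u} cos(zu) du`. -/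
noncomputable def XiStar (z : ℂ) : ℂ :=
  16 * (Real.pi : ℂ)^2 * ∫ u in Ioi (0:ℝ),
    ((Real.cosh (9*u/2) * Real.exp (-(2*Real.pi) * Real.cosh (2*u)) : ℝ) : ℂ) *
      Complex.cos (z * (u:ℂ))

/-- `S(α, β; w) = ∑_{k=0}^∞ (α)_k (β)_k w^k / (k!·(k+1)!) = ₂F₁(α, β; 2; w)`. -/
noncomputable def S2gauss (α β w : ℝ) : ℝ :=
  ∑' k : ℕ, (ascPochhammer ℝ k).eval α * (ascPochhammer ℝ k).eval β * w^k /
    ((k.factorial : ℝ) * ((k+1).factorial : ℝ))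

/-- `g_{t,c}(y)`. -/
noncomputable def gPol (t c y : ℝ) : ℝ :=
  y*(y+2*c) * t ^ (y+c) * S2gauss (y+1) (y+2*c+1) (1-t)
  + y*(y-2*c) * t ^ (y-c) * S2gauss (y+1) (y-2*c+1) (1-t)
  - 2*y^2 * t ^ y * S2gauss (y+1) (y+1) (1-t)

/-!
Euler's transformation `₂F₁(a, b; c; x) = (1 - x)^(c - a - b) ₂F₁(c - a, c - b; c; x)` with
`a = b = y + 1`, `c = 2`, `x = 1 - t` reads `Sgauss y t = t^(-2y) Sgauss (-y) t`, which is exactly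
the evenness of `fPol t`. Euler's transformation is proved on coefficients: `(1 - x)^(c - a - b)`
is `₂F₁(a + b - c, 1; 1; x)`, so after a Cauchy product it becomes the convolution identity
`∑_{i + j = k} (a + b - c)_i / i! · (c - a)_j (c - b)_j / (j! (c)_j) = (a)_k (b)_k / (k! (c)_k)`
(Pfaff–Saalschütz). Both sides satisfy the recurrence `(k + 1)(c + k) B_{k+1} = (a + k)(b + k) B_k`,
which for the left side is a telescoping sum.
-/

open Nat Finset FormalMultilinearSeries

theorem one_le_radius_ordinaryHypergeometricSeries {𝕂 : Type*} (𝔸 : Type*) [RCLike 𝕂]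
    [NormedDivisionRing 𝔸] [NormedAlgebra 𝕂 𝔸] (a b c : 𝕂) :
    1 ≤ (ordinaryHypergeometricSeries 𝔸 a b c).radius := by
  by_cases h : ∀ k : ℕ, (k : 𝕂) ≠ -a ∧ (k : 𝕂) ≠ -b ∧ (k : 𝕂) ≠ -c
  · exact (ordinaryHypergeometricSeries_radius_eq_one 𝔸 a b c h).ge
  simp only [not_forall, not_and_or, not_not] at h
  obtain ⟨k, hk | hk | hk⟩ := h <;> rw [neg_eq_iff_eq_neg.mp hk.symm]
  · simp [ordinaryHypergeometric_radius_top_of_neg_nat₁]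
  · simp [ordinaryHypergeometric_radius_top_of_neg_nat₂]
  · simp [ordinaryHypergeometric_radius_top_of_neg_nat₃]

theorem ascPochhammer_eval_two {S : Type*} [CommSemiring S] (n : ℕ) :
    (ascPochhammer S n).eval 2 = ((n + 1)! : S) := by
  induction n with
  | zero => simp
  | succ n ih => rw [ascPochhammer_succ_eval, ih, factorial_succ (n + 1)]; push_cast; ring

section Field

variable {𝕂 : Type*} [Field 𝕂] [CharZero 𝕂]

theorem ordinaryHypergeometricCoefficient_succ_mul (a b c : 𝕂) (n : ℕ) (hc : c + n ≠ 0) :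
    ordinaryHypergeometricCoefficient a b c (n + 1) * ((n + 1) * (c + n)) =
      ordinaryHypergeometricCoefficient a b c n * ((a + n) * (b + n)) := by
  have hn : (n + 1 : 𝕂) ≠ 0 := n.cast_add_one_ne_zero
  simp only [ordinaryHypergeometricCoefficient, ascPochhammer_succ_eval, factorial_succ,
    cast_mul, cast_add, cast_one, mul_inv]
  field_simp

variable {a b c : 𝕂}

-- The telescoping certificate is `u j = j (c + j - 1) e (k + 1 - j) A j`, here with `k = j + d`.
theorem ordinaryHypergeometricCoefficient_euler_telescope (hc : ∀ n : ℕ, c + n ≠ 0) (j d : ℕ) :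
    let e := ordinaryHypergeometricCoefficient (a + b - c) 1 1
    let A := ordinaryHypergeometricCoefficient (c - a) (c - b) c
    (j + d + 1) * (c + (j + d)) * (e (d + 1) * A j) - (a + (j + d)) * (b + (j + d)) * (e d * A j)
      = j * (c + j - 1) * (e (d + 1) * A j) - (j + 1) * (c + j) * (e d * A (j + 1)) := by
  intro e A
  have hd : (d + 1 : 𝕂) ≠ 0 := d.cast_add_one_ne_zero
  have he := ordinaryHypergeometricCoefficient_succ_mul (a + b - c) 1 1 d (by rwa [add_comm])
  have hA := ordinaryHypergeometricCoefficient_succ_mul (c - a) (c - b) c j (hc j)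
  refine mul_left_cancel₀ (mul_ne_zero hd hd) ?_
  linear_combination ((j + d + 1) * (c + (j + d)) - j * (c + j - 1)) * A j * he
    + (d + 1) * (d + 1) * e d * hA

theorem sum_range_ordinaryHypergeometricCoefficient_recurrence (hc : ∀ n : ℕ, c + n ≠ 0)
    (k : ℕ) :
    let e := ordinaryHypergeometricCoefficient (a + b - c) 1 1
    let A := ordinaryHypergeometricCoefficient (c - a) (c - b) c
    (k + 1) * (c + k) * ∑ j ∈ range (k + 2), e (k + 1 - j) * A j
      = (a + k) * (b + k) * ∑ j ∈ range (k + 1), e (k - j) * A j := by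
  intro e A
  set u : ℕ → 𝕂 := fun j ↦ j * (c + j - 1) * (e (k + 1 - j) * A j)
  have htelescope : ∀ j ∈ range (k + 1),
      (k + 1) * (c + k) * (e (k + 1 - j) * A j) - (a + k) * (b + k) * (e (k - j) * A j)
        = u j - u (j + 1) := by
    intro j hj
    obtain ⟨d, rfl⟩ := Nat.exists_eq_add_of_le (Nat.lt_succ_iff.mp (mem_range.mp hj))
    simp only [u, show j + d + 1 - j = d + 1 by omega, show j + d - j = d by omega,
      show j + d + 1 - (j + 1) = d by omega]
    push_cast
    linear_combination ordinaryHypergeometricCoefficient_euler_telescope hc j d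
  have hsum := (sum_congr rfl htelescope).trans (sum_range_sub' u (k + 1))
  rw [sum_sub_distrib, ← mul_sum, ← mul_sum] at hsum
  simp only [u, Nat.sub_self] at hsum
  push_cast at hsum
  rw [sum_range_succ, Nat.sub_self]
  linear_combination hsum

theorem sum_antidiagonal_ordinaryHypergeometricCoefficient (hc : ∀ n : ℕ, c + n ≠ 0) (k : ℕ) :
    ∑ p ∈ antidiagonal k, ordinaryHypergeometricCoefficient (a + b - c) 1 1 p.1 *
      ordinaryHypergeometricCoefficient (c - a) (c - b) c p.2 =
        ordinaryHypergeometricCoefficient a b c k := by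
  rw [← Nat.sum_antidiagonal_swap]
  simp only [Prod.fst_swap, Prod.snd_swap]
  rw [Nat.sum_antidiagonal_eq_sum_range_succ (fun i j ↦
    ordinaryHypergeometricCoefficient (a + b - c) 1 1 j *
      ordinaryHypergeometricCoefficient (c - a) (c - b) c i)]
  induction k with
  | zero => simp
  | succ k ih =>
    have hk : ((k + 1) * (c + k) : 𝕂) ≠ 0 := mul_ne_zero k.cast_add_one_ne_zero (hc k)
    refine mul_left_cancel₀ hk ?_
    rw [sum_range_ordinaryHypergeometricCoefficient_recurrence hc k, ih]
    linear_combination -(ordinaryHypergeometricCoefficient_succ_mul a b c k (hc k))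

end Field

namespace Real

theorem hasSum_ordinaryHypergeometricCoefficient_one_one_mul_pow (s : ℝ) {x : ℝ}
    (hx : |x| < 1) :
    HasSum (fun n ↦ ordinaryHypergeometricCoefficient s 1 1 n * x ^ n) ((1 - x) ^ (-s)) := by
  have h := (one_add_rpow_hasFPowerSeriesOnBall_zero (a := -s)).hasSum (y := -x)
    (by simpa [Metric.mem_eball, edist_dist] using hx)
  rw [binomialSeries_eq_ordinaryHypergeometricSeries (b := (1 : ℝ))
    fun k ↦ (neg_one_lt_zero.trans_le k.cast_nonneg).ne'] at h
  simp only [ordinaryHypergeometricSeries, ofScalars_comp_neg_id, ofScalars_apply_eq, smul_eq_mul,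
    neg_neg, ← sub_eq_add_neg, zero_sub] at h
  refine h.congr_fun fun n ↦ ?_
  rcases neg_one_pow_eq_or ℝ n with h | h <;> simp [neg_pow x, h]

theorem ordinaryHypergeometric_eq_one_sub_rpow_mul {a b c x : ℝ} (hc : ∀ n : ℕ, c + n ≠ 0)
    (hx : |x| < 1) :
    ₂F₁ a b c x = (1 - x) ^ (c - a - b) * ₂F₁ (c - a) (c - b) c x := by
  have hmem : ∀ a b c : ℝ, x ∈ Metric.eball 0 (ordinaryHypergeometricSeries ℝ a b c).radius :=
    fun a b c ↦ lt_of_lt_of_le (by simpa [edist_dist] using hx)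
      (one_le_radius_ordinaryHypergeometricSeries ℝ a b c)
  have hterm : ∀ a b c : ℝ, ∀ n, (ordinaryHypergeometricSeries ℝ a b c n fun _ ↦ x) =
      ordinaryHypergeometricCoefficient a b c n * x ^ n := fun a b c n ↦ by
    rw [ordinaryHypergeometricSeries_apply_eq, smul_eq_mul]
  have htsum : ∀ a b c : ℝ, ₂F₁ a b c x = ∑' n, ordinaryHypergeometricCoefficient a b c n * x ^ n :=
    fun a b c ↦ by simp only [ordinaryHypergeometric, FormalMultilinearSeries.sum, hterm]
  have hsumE := (ordinaryHypergeometricSeries ℝ (a + b - c) 1 1).summable_norm_apply (hmem _ _ _)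
  have hsumA := (ordinaryHypergeometricSeries ℝ (c - a) (c - b) c).summable_norm_apply (hmem _ _ _)
  simp only [hterm] at hsumE hsumA
  rw [show c - a - b = -(a + b - c) by ring,
    ← (hasSum_ordinaryHypergeometricCoefficient_one_one_mul_pow (a + b - c) hx).tsum_eq,
    htsum, htsum, tsum_mul_tsum_eq_tsum_sum_antidiagonal_of_summable_norm hsumE hsumA]
  refine tsum_congr fun n ↦ ?_
  rw [← sum_antidiagonal_ordinaryHypergeometricCoefficient hc n, sum_mul]
  refine sum_congr rfl fun p hp ↦ ?_
  rw [← mem_antidiagonal.mp hp, pow_add]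
  ring

end Real

theorem Sgauss_eq_ordinaryHypergeometric (y t : ℝ) :
    Sgauss y t = ₂F₁ (y + 1) (y + 1) 2 (1 - t) := by
  rw [Sgauss, ordinaryHypergeometric_eq_tsum]
  refine tsum_congr fun k ↦ ?_
  rw [ascPochhammer_eval_two, smul_eq_mul]
  field_simp

theorem Sgauss_eq_rpow_mul_Sgauss_neg (y : ℝ) {t : ℝ} (ht : 0 < t) (ht2 : t < 2) :
    Sgauss y t = t ^ (-(2 * y)) * Sgauss (-y) t := by
  have hc : ∀ n : ℕ, (2 : ℝ) + n ≠ 0 := fun n ↦ by positivity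
  have hx : |1 - t| < 1 := abs_sub_lt_iff.mpr ⟨by linarith, by linarith⟩
  rw [Sgauss_eq_ordinaryHypergeometric, Sgauss_eq_ordinaryHypergeometric,
    ordinaryHypergeometric_eq_one_sub_rpow_mul hc hx, sub_sub_cancel]
  congr 2 <;> ring

/-- `f_t` is an even function of `y`. -/
theorem fPol_even (t : ℝ) (ht : 0 < t) (ht1 : t < 1) (y : ℝ) :
    fPol t (-y) = fPol t y := by
  have hpow : t ^ y * t ^ (-(2 * y)) = t ^ (-y) := by
    rw [← rpow_add ht]
    ring_nf
  rw [fPol, fPol, Sgauss_eq_rpow_mul_Sgauss_neg y ht (by linarith), neg_sq]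
  linear_combination (-(y ^ 2 * Sgauss (-y) t)) * hpow
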